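/- Let V_1, V_2, V_3 be two-dimensional subspaces (planes) of the complex vector space ℂ³. Then (V_1, V_2, V_3) is a feasible strategy for (3, 3, 2, 2, 2) if and only if V_1 ∩ V_2 ∩ V_3 = 0. -/

import Mathlib

/-!
If a nonzero vector lay in all three planes it would lie in two of the pairwise intersections,
which independence forbids. Conversely, when the planes meet only in `0`, Grassmann's formula
makes each `Vᵢ ⊓ Vⱼ` a line; two distinct lines inside a plane span it, and a line meeting the
opposite plane trivially spans `ℂ³` together with it.
-/

/-- `(V 0, …, V (K-1))` is a *feasible strategy* for `(K, d 0, …, d (K-1))`: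
(i) `dim (V i) = d i` for all `i`;
(ii) for every `i`, the family `(V i ⊓ V j)_{j ≠ i}` is independent and
    `V i = ⨆_{j ≠ i} (V i ⊓ V j)`;
(iii) the family `(V i ⊓ V j)_{i < j}` is independent and its sup is the whole space. -/
def FeasibleStrategy {E : Type*} [AddCommGroup E] [Module ℂ E]
    {K : ℕ} (d : Fin K → ℕ) (V : Fin K → Submodule ℂ E) : Prop :=
  (∀ i, Module.finrank ℂ (V i) = d i) ∧
  (∀ i, iSupIndep (fun j : {j : Fin K // j ≠ i} => V i ⊓ V j.1) ∧
    V i = ⨆ j : {j : Fin K // j ≠ i}, V i ⊓ V j.1) ∧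
  iSupIndep (fun p : {p : Fin K × Fin K // p.1 < p.2} => V p.1.1 ⊓ V p.1.2) ∧
  (⨆ p : {p : Fin K × Fin K // p.1 < p.2}, V p.1.1 ⊓ V p.1.2) = ⊤

open Module

theorem iSup_eq_sup_of_forall_eq_or_eq {α ι : Type*} [CompleteLattice α] {t : ι → α} {i j : ι}
    (huniv : ∀ k, k = i ∨ k = j) : ⨆ k, t k = t i ⊔ t j :=
  le_antisymm (iSup_le fun k => by rcases huniv k with rfl | rfl <;> simp)
    (sup_le (le_iSup t i) (le_iSup t j))

theorem iSupIndep_and_eq_iSup_iff_of_forall_eq_or_eq {α ι : Type*} [CompleteLattice α]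
    {t : ι → α} {i j : ι} (hij : i ≠ j) (huniv : ∀ k, k = i ∨ k = j) {a : α} :
    (iSupIndep t ∧ a = ⨆ k, t k) ↔ Disjoint (t i) (t j) ∧ t i ⊔ t j = a := by
  rw [iSupIndep_pair hij huniv, iSup_eq_sup_of_forall_eq_or_eq huniv, eq_comm]

theorem iSupIndep_comp_bijective_iff {α ι ι' : Type*} [CompleteLattice α] {t : ι → α}
    {f : ι' → ι} (hf : f.Bijective) : iSupIndep (t ∘ f) ↔ iSupIndep t :=
  ⟨fun h => h.comp' hf.2, fun h => h.comp hf.1⟩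

theorem disjoint_inf_inf_iff {α : Type*} [Lattice α] [OrderBot α] {a b c : α} :
    Disjoint (a ⊓ b) (a ⊓ c) ↔ a ⊓ b ⊓ c = ⊥ := by
  rw [disjoint_iff, inf_inf_inf_comm, inf_idem, inf_assoc]

theorem iSupIndep_inf_of_inf_inf_eq_bot {α : Type*} [CompleteLattice α] {a b c : α}
    (h : a ⊓ b ⊓ c = ⊥) : iSupIndep ![a ⊓ b, a ⊓ c, b ⊓ c] := by
  have hab_c : Disjoint (a ⊓ b) c := disjoint_iff.2 h
  have hac_b : Disjoint (a ⊓ c) b := disjoint_iff.2 (by rw [← h]; ac_rfl)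
  have hbc_a : Disjoint (b ⊓ c) a := disjoint_iff.2 (by rw [← h]; ac_rfl)
  rw [iSupIndep_fin_three]
  exact ⟨hab_c.mono_right (sup_le inf_le_right inf_le_right),
    hac_b.mono_right (sup_le inf_le_left inf_le_right),
    hbc_a.mono_right (sup_le inf_le_left inf_le_left)⟩

namespace Submodule

variable {K E : Type*} [Field K] [AddCommGroup E] [Module K E] [FiniteDimensional K E]

theorem finrank_add_finrank_le_finrank_add_finrank_inf (A B : Submodule K E) :
    finrank K A + finrank K B ≤ finrank K E + finrank K ↥(A ⊓ B) := by
  have := finrank_sup_add_finrank_inf_eq A B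
  have := (A ⊔ B).finrank_le
  omega

theorem sup_eq_of_disjoint {X Y A : Submodule K E} (hX : X ≤ A) (hY : Y ≤ A)
    (hXY : Disjoint X Y) (hdim : finrank K A ≤ finrank K X + finrank K Y) : X ⊔ Y = A :=
  eq_of_le_of_finrank_le (sup_le hX hY) <| by
    rwa [← finrank_sup_add_finrank_inf_eq, hXY.eq_bot, finrank_bot, add_zero] at hdim

variable {A B C : Submodule K E}

theorem inf_sup_inf_eq_left_of_inf_inf_eq_bot
    (hdim : 2 * finrank K E ≤ finrank K A + finrank K B + finrank K C) (h : A ⊓ B ⊓ C = ⊥) :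
    A ⊓ B ⊔ A ⊓ C = A := by
  have := A.finrank_add_finrank_le_finrank_add_finrank_inf B
  have := A.finrank_add_finrank_le_finrank_add_finrank_inf C
  exact sup_eq_of_disjoint inf_le_left inf_le_left (disjoint_inf_inf_iff.2 h) (by omega)

theorem inf_sup_eq_top_of_inf_inf_eq_bot
    (hdim : 2 * finrank K E ≤ finrank K A + finrank K B + finrank K C) (h : A ⊓ B ⊓ C = ⊥) :
    A ⊓ B ⊔ C = ⊤ := by
  have := A.finrank_add_finrank_le_finrank_add_finrank_inf B
  exact eq_top_of_disjoint _ _ (by omega) (disjoint_iff.2 h)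

end Submodule


theorem feasibleStrategy_fin_three_iff {E : Type*} [AddCommGroup E] [Module ℂ E]
    (d : Fin 3 → ℕ) (A B C : Submodule ℂ E) :
    FeasibleStrategy d ![A, B, C] ↔
      (finrank ℂ A = d 0 ∧ finrank ℂ B = d 1 ∧ finrank ℂ C = d 2) ∧
      ((Disjoint (A ⊓ B) (A ⊓ C) ∧ A ⊓ B ⊔ A ⊓ C = A) ∧
        (Disjoint (B ⊓ A) (B ⊓ C) ∧ B ⊓ A ⊔ B ⊓ C = B) ∧
        (Disjoint (C ⊓ A) (C ⊓ B) ∧ C ⊓ A ⊔ C ⊓ B = C)) ∧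
      iSupIndep ![A ⊓ B, A ⊓ C, B ⊓ C] ∧ A ⊓ B ⊔ A ⊓ C ⊔ B ⊓ C = ⊤ := by
  let pair : Fin 3 → {p : Fin 3 × Fin 3 // p.1 < p.2} :=
    ![⟨(0, 1), by decide⟩, ⟨(0, 2), by decide⟩, ⟨(1, 2), by decide⟩]
  have hpair : pair.Bijective := by decide
  have hcomp : (fun p : {p : Fin 3 × Fin 3 // p.1 < p.2} => ![A, B, C] p.1.1 ⊓ ![A, B, C] p.1.2)
      ∘ pair = ![A ⊓ B, A ⊓ C, B ⊓ C] := by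
    funext k; fin_cases k <;> rfl
  have hindep := iSupIndep_comp_bijective_iff hpair
    (t := fun p => ![A, B, C] p.1.1 ⊓ ![A, B, C] p.1.2)
  have hsup := hpair.surjective.iSup_comp fun p => ![A, B, C] p.1.1 ⊓ ![A, B, C] p.1.2
  rw [iSup_fin_three] at hsup
  change A ⊓ B ⊔ A ⊓ C ⊔ B ⊓ C = _ at hsup
  rw [hcomp] at hindep
  rw [FeasibleStrategy, ← hindep, ← hsup, Fin.forall_fin_succ, Fin.forall_fin_succ]
  refine and_congr (by simp only [Fin.forall_fin_succ, IsEmpty.forall_iff, and_true]; rfl)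
    (and_congr ?_ Iff.rfl)
  simp only [Fin.forall_fin_succ, IsEmpty.forall_iff, and_true]
  refine and_congr ?_ (and_congr ?_ ?_)
  · exact iSupIndep_and_eq_iSup_iff_of_forall_eq_or_eq
      (ι := {j : Fin 3 // j ≠ 0})
      (i := ⟨1, by decide⟩) (j := ⟨2, by decide⟩) (by decide) (by decide)
  · exact iSupIndep_and_eq_iSup_iff_of_forall_eq_or_eq
      (ι := {j : Fin 3 // j ≠ 1})
      (i := ⟨0, by decide⟩) (j := ⟨2, by decide⟩) (by decide) (by decide)
  · exact iSupIndep_and_eq_iSup_iff_of_forall_eq_or_eq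
      (ι := {j : Fin 3 // j ≠ 2})
      (i := ⟨0, by decide⟩) (j := ⟨1, by decide⟩) (by decide) (by decide)

theorem stmt13 (V₁ V₂ V₃ : Submodule ℂ (Fin 3 → ℂ))
    (h₁ : Module.finrank ℂ V₁ = 2) (h₂ : Module.finrank ℂ V₂ = 2)
    (h₃ : Module.finrank ℂ V₃ = 2) :
    FeasibleStrategy (fun _ => 2) ![V₁, V₂, V₃] ↔ V₁ ⊓ V₂ ⊓ V₃ = ⊥ := by
  have hdim : 2 * finrank ℂ (Fin 3 → ℂ) ≤ 2 + 2 + 2 := by simp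
  rw [feasibleStrategy_fin_three_iff]
  constructor
  · rintro ⟨-, ⟨-, ⟨hV₂, -⟩, -⟩, -⟩
    rw [inf_comm V₁ V₂]
    exact disjoint_inf_inf_iff.1 hV₂
  · intro h
    have h₂₁₃ : V₂ ⊓ V₁ ⊓ V₃ = ⊥ := by rw [← h]; ac_rfl
    have h₃₁₂ : V₃ ⊓ V₁ ⊓ V₂ = ⊥ := by rw [← h]; ac_rfl
    have h₂₃₁ : V₂ ⊓ V₃ ⊓ V₁ = ⊥ := by rw [← h]; ac_rfl
    refine ⟨⟨h₁, h₂, h₃⟩, ⟨⟨disjoint_inf_inf_iff.2 h, ?_⟩, ⟨disjoint_inf_inf_iff.2 h₂₁₃, ?_⟩,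
      ⟨disjoint_inf_inf_iff.2 h₃₁₂, ?_⟩⟩, iSupIndep_inf_of_inf_inf_eq_bot h, ?_⟩
    · exact Submodule.inf_sup_inf_eq_left_of_inf_inf_eq_bot (by omega) h
    · exact Submodule.inf_sup_inf_eq_left_of_inf_inf_eq_bot (by omega) h₂₁₃
    · exact Submodule.inf_sup_inf_eq_left_of_inf_inf_eq_bot (by omega) h₃₁₂
    · rw [Submodule.inf_sup_inf_eq_left_of_inf_inf_eq_bot (by omega) h, sup_comm]
      exact Submodule.inf_sup_eq_top_of_inf_inf_eq_bot (by omega) h₂₃₁
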